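/- Let Ω, ∂Ω, σ, n be as in the context, and let u, v : ℝ^d → ℝ be C² on a neighborhood of the closure of Ω and satisfy −Δu = E_u·u and −Δv = E_v·v on Ω with E_u ≠ E_v. Set ε := E_u − E_v and 𝓔 := E_u + E_v. Then ∫_Ω ‖x‖²·u(x)·v(x) dx = (4/ε²)·∫_{∂Ω} [ ((d−2)/2)(⟨n(x),∇u(x)⟩v(x) + ⟨n(x),∇v(x)⟩u(x)) + (𝓔/ε − (ε/4)‖x‖²)(⟨n(x),∇u(x)⟩v(x) − ⟨n(x),∇v(x)⟩u(x)) + ⟨x,n(x)⟩((𝓔/2)u(x)v(x) − ⟨∇u(x),∇v(x)⟩) + ⟨x,∇u(x)⟩⟨n(x),∇v(x)⟩ + ⟨x,∇v(x)⟩⟨n(x),∇u(x)⟩ ] dσ(x). -/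

import Mathlib

open MeasureTheory
open scoped RealInnerProductSpace Classical

noncomputable section

/-- The Euclidean Laplacian: the sum of the second partial derivatives. -/
def lap {d : ℕ} (u : EuclideanSpace ℝ (Fin d) → ℝ) (x : EuclideanSpace ℝ (Fin d)) : ℝ :=
  ∑ i, fderiv ℝ (fun y => fderiv ℝ u y (EuclideanSpace.single i (1:ℝ))) x
    (EuclideanSpace.single i (1:ℝ))

/-- The divergence: the sum of the partial derivatives of the components. -/
def divg {d : ℕ} (F : EuclideanSpace ℝ (Fin d) → EuclideanSpace ℝ (Fin d))
    (x : EuclideanSpace ℝ (Fin d)) : ℝ :=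
  ∑ i, fderiv ℝ (fun y => ⟪F y, EuclideanSpace.single i (1:ℝ)⟫) x
    (EuclideanSpace.single i (1:ℝ))

/-!
Up to the factor `(Eu - Ev)² / 4`, the integrand `‖x‖² u v` is the divergence of an explicit
vector field (`boundaryField`), and the identity is Gauss–Green applied to that field. The field
combines the Rellich–Pohozaev field `⟨x, ∇v⟩ ∇u + ⟨x, ∇u⟩ ∇v - ⟨∇u, ∇v⟩ x`, the fields
`v ∇u ± u ∇v`, the weighted Wronskian `‖x‖² (v ∇u - u ∇v)` and `u v x`. In its divergence the
Hessian terms cancel by symmetry of second derivatives, the eigenvalue equations turn every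
Laplacian into a multiple of `u` or `v`, and then all terms except `(Eu - Ev)² / 4 ‖x‖² u v`
cancel; the coefficient `(Eu + Ev) / (Eu - Ev)` is chosen so that Green's identity
`div (v ∇u - u ∇v) = (Ev - Eu) u v` removes the remaining multiple of `u v`.
-/

open InnerProductSpace

variable {d : ℕ}
local notation "E" => EuclideanSpace ℝ (Fin d)

attribute [local fun_prop] DifferentiableAt.inner ContDiffAt.inner

section Divergence

variable {F G : EuclideanSpace ℝ (Fin d) → EuclideanSpace ℝ (Fin d)} {x : EuclideanSpace ℝ (Fin d)}

lemma divg_eq_sum_inner_fderiv (hF : DifferentiableAt ℝ F x) :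
    divg F x = ∑ i, ⟪fderiv ℝ F x (EuclideanSpace.single i 1), EuclideanSpace.single i 1⟫ := by
  refine Finset.sum_congr rfl fun i _ => ?_
  rw [fderiv_inner_apply ℝ hF (differentiableAt_const _)]
  simp

lemma divg_add (hF : DifferentiableAt ℝ F x) (hG : DifferentiableAt ℝ G x) :
    divg (fun y => F y + G y) x = divg F x + divg G x := by
  rw [divg_eq_sum_inner_fderiv (hF.fun_add hG), divg_eq_sum_inner_fderiv hF,
    divg_eq_sum_inner_fderiv hG, ← Finset.sum_add_distrib, fderiv_fun_add hF hG]
  simp [inner_add_left]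

lemma divg_sub (hF : DifferentiableAt ℝ F x) (hG : DifferentiableAt ℝ G x) :
    divg (fun y => F y - G y) x = divg F x - divg G x := by
  rw [divg_eq_sum_inner_fderiv (hF.fun_sub hG), divg_eq_sum_inner_fderiv hF,
    divg_eq_sum_inner_fderiv hG, ← Finset.sum_sub_distrib, fderiv_fun_sub hF hG]
  simp [inner_sub_left]

lemma divg_smul {c : E → ℝ} (hc : DifferentiableAt ℝ c x) (hG : DifferentiableAt ℝ G x) :
    divg (fun y => c y • G y) x = fderiv ℝ c x (G x) + c x * divg G x := by
  have hexpand : ∑ i, ⟪G x, EuclideanSpace.single i 1⟫ • EuclideanSpace.single i (1 : ℝ) = G x := by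
    simpa [real_inner_comm] using (EuclideanSpace.basisFun (Fin d) ℝ).sum_repr' (G x)
  rw [divg_eq_sum_inner_fderiv (hc.fun_smul hG), divg_eq_sum_inner_fderiv hG,
    fderiv_fun_smul hc hG, Finset.mul_sum]
  conv_rhs => rw [← hexpand]
  simp only [add_apply, smul_apply, ContinuousLinearMap.smulRight_apply, inner_add_left,
    real_inner_smul_left, mul_comm, Finset.sum_add_distrib, map_sum, map_smul, smul_eq_mul]
  exact add_comm _ _

lemma divg_const_smul (a : ℝ) (hG : DifferentiableAt ℝ G x) :
    divg (fun y => a • G y) x = a * divg G x := by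
  simpa using divg_smul (differentiableAt_const a) hG

lemma divg_id : divg (fun y : E => y) x = d := by
  rw [divg_eq_sum_inner_fderiv differentiableAt_fun_id, fderiv_fun_id]
  simp

lemma divg_gradient (u : E → ℝ) : divg (gradient u) x = lap u x := by
  simp only [divg, lap, inner_gradient_left]

end Divergence

section

variable {u v : EuclideanSpace ℝ (Fin d) → ℝ} {x : EuclideanSpace ℝ (Fin d)}

lemma gradient_eq_comp_fderiv (u : E → ℝ) : gradient u = (toDual ℝ E).symm ∘ fderiv ℝ u := rfl

lemma contDiffAt_gradient (hu : ContDiffAt ℝ 2 u x) : ContDiffAt ℝ 1 (gradient u) x := by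
  rw [gradient_eq_comp_fderiv]
  exact (toDual ℝ E).symm.contDiff.contDiffAt.comp x (hu.fderiv_right le_rfl)

lemma inner_fderiv_gradient (u : E → ℝ) (x a b : E) :
    ⟪fderiv ℝ (gradient u) x a, b⟫ = fderiv ℝ (fderiv ℝ u) x a b := by
  rw [gradient_eq_comp_fderiv, LinearIsometryEquiv.comp_fderiv]
  exact toDual_symm_apply

lemma ContDiffAt.inner_fderiv_gradient_comm (hu : ContDiffAt ℝ 2 u x) (a b : E) :
    ⟪fderiv ℝ (gradient u) x a, b⟫ = ⟪fderiv ℝ (gradient u) x b, a⟫ := by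
  rw [inner_fderiv_gradient, inner_fderiv_gradient]
  exact hu.isSymmSndFDerivAt (by simp) a b

lemma divg_smul_gradient (hv : DifferentiableAt ℝ v x) (hgu : DifferentiableAt ℝ (gradient u) x) :
    divg (fun y => v y • gradient u y) x = ⟪gradient u x, gradient v x⟫ + v x * lap u x := by
  rw [divg_smul hv hgu, divg_gradient, ← inner_gradient_left, real_inner_comm]

lemma divg_smul_gradient_add (hu : DifferentiableAt ℝ u x) (hv : DifferentiableAt ℝ v x)
    (hgu : DifferentiableAt ℝ (gradient u) x) (hgv : DifferentiableAt ℝ (gradient v) x) :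
    divg (fun y => v y • gradient u y + u y • gradient v y) x
      = 2 * ⟪gradient u x, gradient v x⟫ + v x * lap u x + u x * lap v x := by
  rw [divg_add (hv.fun_smul hgu) (hu.fun_smul hgv), divg_smul_gradient hv hgu,
    divg_smul_gradient hu hgv, real_inner_comm (gradient u x)]
  ring

lemma divg_smul_gradient_sub (hu : DifferentiableAt ℝ u x) (hv : DifferentiableAt ℝ v x)
    (hgu : DifferentiableAt ℝ (gradient u) x) (hgv : DifferentiableAt ℝ (gradient v) x) :
    divg (fun y => v y • gradient u y - u y • gradient v y) x = v x * lap u x - u x * lap v x := by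
  rw [divg_sub (hv.fun_smul hgu) (hu.fun_smul hgv), divg_smul_gradient hv hgu,
    divg_smul_gradient hu hgv, real_inner_comm (gradient u x)]
  ring

def pohozaevField (u v : E → ℝ) (y : E) : E :=
  ⟪y, gradient v y⟫ • gradient u y + ⟪y, gradient u y⟫ • gradient v y
    - ⟪gradient u y, gradient v y⟫ • y

lemma divg_pohozaevField (hu : ContDiffAt ℝ 2 u x) (hv : ContDiffAt ℝ 2 v x) :
    divg (pohozaevField u v) x = (2 - d) * ⟪gradient u x, gradient v x⟫
      + ⟪x, gradient v x⟫ * lap u x + ⟪x, gradient u x⟫ * lap v x := by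
  have hgu := (contDiffAt_gradient hu).differentiableAt one_ne_zero
  have hgv := (contDiffAt_gradient hv).differentiableAt one_ne_zero
  have hsymm_u : ⟪fderiv ℝ (gradient u) x x, gradient v x⟫
      = ⟪x, fderiv ℝ (gradient u) x (gradient v x)⟫ := by
    rw [hu.inner_fderiv_gradient_comm, real_inner_comm]
  have hsymm_v : ⟪gradient u x, fderiv ℝ (gradient v) x x⟫
      = ⟪x, fderiv ℝ (gradient v) x (gradient u x)⟫ := by
    rw [real_inner_comm, hv.inner_fderiv_gradient_comm, real_inner_comm]
  unfold pohozaevField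
  rw [divg_sub (by fun_prop) (by fun_prop), divg_add (by fun_prop) (by fun_prop),
    divg_smul (by fun_prop) hgu, divg_smul (by fun_prop) hgv,
    divg_smul (by fun_prop) differentiableAt_fun_id, divg_gradient, divg_gradient, divg_id,
    fderiv_inner_apply ℝ differentiableAt_fun_id hgv,
    fderiv_inner_apply ℝ differentiableAt_fun_id hgu, fderiv_inner_apply ℝ hgu hgv]
  simp only [fderiv_fun_id, ContinuousLinearMap.id_apply]
  rw [hsymm_u, hsymm_v, real_inner_comm (gradient v x)]
  ring

variable {Eu Ev : ℝ}

def boundaryField (Eu Ev : ℝ) (u v : E → ℝ) (y : E) : E :=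
  pohozaevField u v y + (((d : ℝ) - 2) / 2) • (v y • gradient u y + u y • gradient v y)
    + ((Eu + Ev) / (Eu - Ev) - (Eu - Ev) / 4 * ‖y‖ ^ 2) • (v y • gradient u y - u y • gradient v y)
    + ((Eu + Ev) / 2 * (u y * v y)) • y

lemma inner_boundaryField (x w : E) :
    ⟪boundaryField Eu Ev u v x, w⟫
      = ((d : ℝ) - 2) / 2 * (⟪w, gradient u x⟫ * v x + ⟪w, gradient v x⟫ * u x)
        + ((Eu + Ev) / (Eu - Ev) - (Eu - Ev) / 4 * ‖x‖ ^ 2) *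
            (⟪w, gradient u x⟫ * v x - ⟪w, gradient v x⟫ * u x)
        + ⟪x, w⟫ * ((Eu + Ev) / 2 * u x * v x - ⟪gradient u x, gradient v x⟫)
        + ⟪x, gradient u x⟫ * ⟪w, gradient v x⟫
        + ⟪x, gradient v x⟫ * ⟪w, gradient u x⟫ := by
  simp only [boundaryField, pohozaevField, inner_add_left, inner_sub_left, real_inner_smul_left]
  rw [real_inner_comm (gradient u x) w, real_inner_comm (gradient v x) w]
  ring

lemma contDiffAt_boundaryField (hu : ContDiffAt ℝ 2 u x) (hv : ContDiffAt ℝ 2 v x) :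
    ContDiffAt ℝ 1 (boundaryField Eu Ev u v) x := by
  have := contDiffAt_gradient hu
  have := contDiffAt_gradient hv
  have := hu.of_le one_le_two
  have := hv.of_le one_le_two
  have : ContDiffAt ℝ 1 (fun y : E => ‖y‖ ^ 2) x := (contDiff_norm_sq ℝ).contDiffAt
  unfold boundaryField pohozaevField
  fun_prop

lemma fderiv_const_sub_mul_norm_sq (a b : ℝ) (x w : E) :
    fderiv ℝ (fun y : E => a - b * ‖y‖ ^ 2) x w = -(2 * b) * ⟪x, w⟫ := by
  rw [fderiv_const_sub, fderiv_const_mul (differentiableAt_fun_id.norm_sq ℝ), fderiv_norm_sq_apply]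
  simp only [neg_apply, smul_apply, coe_innerSL_apply, nsmul_eq_mul, Nat.cast_ofNat, smul_eq_mul]
  ring

lemma divg_boundaryField (hne : Eu ≠ Ev) (hu : ContDiffAt ℝ 2 u x) (hv : ContDiffAt ℝ 2 v x)
    (hHu : -lap u x = Eu * u x) (hHv : -lap v x = Ev * v x) :
    divg (boundaryField Eu Ev u v) x = (Eu - Ev) ^ 2 / 4 * (‖x‖ ^ 2 * u x * v x) := by
  have hud := hu.differentiableAt two_ne_zero
  have hvd := hv.differentiableAt two_ne_zero
  have hgu := (contDiffAt_gradient hu).differentiableAt one_ne_zero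
  have hgv := (contDiffAt_gradient hv).differentiableAt one_ne_zero
  have hnorm : DifferentiableAt ℝ (fun y : E => ‖y‖ ^ 2) x := differentiableAt_id.norm_sq ℝ
  have hP : DifferentiableAt ℝ (pohozaevField u v) x := by unfold pohozaevField; fun_prop
  have hfuv : fderiv ℝ (fun y => (Eu + Ev) / 2 * (u y * v y)) x x
      = (Eu + Ev) / 2 * (u x * ⟪x, gradient v x⟫ + v x * ⟪x, gradient u x⟫) := by
    rw [fderiv_const_mul (hud.fun_mul hvd), fderiv_fun_mul hud hvd]
    simp only [smul_apply, add_apply, smul_eq_mul, ← inner_gradient_left, real_inner_comm x]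
  unfold boundaryField
  rw [divg_add (by fun_prop) (by fun_prop), divg_add (by fun_prop) (by fun_prop),
    divg_add hP (by fun_prop), divg_pohozaevField hu hv, divg_const_smul _ (by fun_prop),
    divg_smul_gradient_add hud hvd hgu hgv, divg_smul (by fun_prop) (by fun_prop),
    divg_smul_gradient_sub hud hvd hgu hgv, fderiv_const_sub_mul_norm_sq,
    divg_smul (by fun_prop) differentiableAt_fun_id, divg_id, hfuv,
    ← neg_neg (lap u x), ← neg_neg (lap v x), hHu, hHv]
  simp only [inner_sub_right, real_inner_smul_right]
  have hε : Eu - Ev ≠ 0 := sub_ne_zero.mpr hne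
  field_simp
  ring

end

theorem boundary_identity_unequal_energies_general
    (d : ℕ) (Ω : Set (EuclideanSpace ℝ (Fin d)))
    (hΩo : IsOpen Ω)
    (n : EuclideanSpace ℝ (Fin d) → EuclideanSpace ℝ (Fin d))
    (hGG : ∀ F : EuclideanSpace ℝ (Fin d) → EuclideanSpace ℝ (Fin d),
      (∃ U, IsOpen U ∧ closure Ω ⊆ U ∧ ContDiffOn ℝ 1 F U) →
      (∫ x in Ω, divg F x) = ∫ x in frontier Ω, ⟪F x, n x⟫ ∂(μH[(d:ℝ) - 1]))
    (u v : EuclideanSpace ℝ (Fin d) → ℝ) (Eu Ev : ℝ) (hne : Eu ≠ Ev)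
    (hur : ∃ U, IsOpen U ∧ closure Ω ⊆ U ∧ ContDiffOn ℝ 2 u U) (hvr : ∃ U, IsOpen U ∧ closure Ω ⊆ U ∧ ContDiffOn ℝ 2 v U)
    (hHu : ∀ x ∈ Ω, -lap u x = Eu * u x) (hHv : ∀ x ∈ Ω, -lap v x = Ev * v x) :
    (∫ x in Ω, ‖x‖ ^ 2 * u x * v x)
      = 4 / (Eu - Ev) ^ 2 *
        ∫ x in frontier Ω,
          (((d : ℝ) - 2) / 2 * (⟪n x, gradient u x⟫ * v x + ⟪n x, gradient v x⟫ * u x)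
            + ((Eu + Ev) / (Eu - Ev) - (Eu - Ev) / 4 * ‖x‖ ^ 2) *
                (⟪n x, gradient u x⟫ * v x - ⟪n x, gradient v x⟫ * u x)
            + ⟪x, n x⟫ * ((Eu + Ev) / 2 * u x * v x - ⟪gradient u x, gradient v x⟫)
            + ⟪x, gradient u x⟫ * ⟪n x, gradient v x⟫
            + ⟪x, gradient v x⟫ * ⟪n x, gradient u x⟫) ∂(μH[(d:ℝ) - 1]) := by
  obtain ⟨Uu, hUuo, hΩUu, hu⟩ := hur
  obtain ⟨Uv, hUvo, hΩUv, hv⟩ := hvr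
  have hu_at : ∀ x ∈ Uu ∩ Uv, ContDiffAt ℝ 2 u x := fun x hx => hu.contDiffAt (hUuo.mem_nhds hx.1)
  have hv_at : ∀ x ∈ Uu ∩ Uv, ContDiffAt ℝ 2 v x := fun x hx => hv.contDiffAt (hUvo.mem_nhds hx.2)
  have hF : ContDiffOn ℝ 1 (boundaryField Eu Ev u v) (Uu ∩ Uv) := fun x hx =>
    (contDiffAt_boundaryField (hu_at x hx) (hv_at x hx)).contDiffWithinAt
  have hdiv : Set.EqOn (fun x => ‖x‖ ^ 2 * u x * v x)
      (fun x => 4 / (Eu - Ev) ^ 2 * divg (boundaryField Eu Ev u v) x) Ω := by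
    intro x hx
    have hxU : x ∈ Uu ∩ Uv := ⟨hΩUu (subset_closure hx), hΩUv (subset_closure hx)⟩
    have hε : Eu - Ev ≠ 0 := sub_ne_zero.mpr hne
    simp only [divg_boundaryField hne (hu_at x hxU) (hv_at x hxU) (hHu x hx) (hHv x hx)]
    field_simp
  rw [setIntegral_congr_fun hΩo.measurableSet hdiv, integral_const_mul,
    hGG _ ⟨Uu ∩ Uv, hUuo.inter hUvo, Set.subset_inter hΩUu hΩUv, hF⟩]
  simp only [inner_boundaryField]

theorem boundary_identity_unequal_energies
    (d : ℕ) (hd : 2 ≤ d) (Ω : Set (EuclideanSpace ℝ (Fin d)))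
    (hΩo : IsOpen Ω) (hΩb : Bornology.IsBounded Ω)
    (n : EuclideanSpace ℝ (Fin d) → EuclideanSpace ℝ (Fin d))
    (hGG : ∀ F : EuclideanSpace ℝ (Fin d) → EuclideanSpace ℝ (Fin d),
      (∃ U, IsOpen U ∧ closure Ω ⊆ U ∧ ContDiffOn ℝ 1 F U) →
      (∫ x in Ω, divg F x) = ∫ x in frontier Ω, ⟪F x, n x⟫ ∂(μH[(d:ℝ) - 1]))
    (u v : EuclideanSpace ℝ (Fin d) → ℝ) (Eu Ev : ℝ) (hne : Eu ≠ Ev)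
    (hur : ∃ U, IsOpen U ∧ closure Ω ⊆ U ∧ ContDiffOn ℝ 2 u U) (hvr : ∃ U, IsOpen U ∧ closure Ω ⊆ U ∧ ContDiffOn ℝ 2 v U)
    (hHu : ∀ x ∈ Ω, -lap u x = Eu * u x) (hHv : ∀ x ∈ Ω, -lap v x = Ev * v x) :
    (∫ x in Ω, ‖x‖ ^ 2 * u x * v x)
      = 4 / (Eu - Ev) ^ 2 *
        ∫ x in frontier Ω,
          (((d : ℝ) - 2) / 2 * (⟪n x, gradient u x⟫ * v x + ⟪n x, gradient v x⟫ * u x)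
            + ((Eu + Ev) / (Eu - Ev) - (Eu - Ev) / 4 * ‖x‖ ^ 2) *
                (⟪n x, gradient u x⟫ * v x - ⟪n x, gradient v x⟫ * u x)
            + ⟪x, n x⟫ * ((Eu + Ev) / 2 * u x * v x - ⟪gradient u x, gradient v x⟫)
            + ⟪x, gradient u x⟫ * ⟪n x, gradient v x⟫
            + ⟪x, gradient v x⟫ * ⟪n x, gradient u x⟫) ∂(μH[(d:ℝ) - 1]) :=
  boundary_identity_unequal_energies_general d Ω hΩo n hGG u v Eu Ev hne hur hvr hHu hHv
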